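/- If two Schwartz functions W₁, W₂ on ℝⁿ (n ≥ 2) have equal X-ray transforms, i.e., ∫_ℝ W₁(x + tω) dt = ∫_ℝ W₂(x + tω) dt for all x ∈ ℝⁿ and all unit vectors ω, then W₁ = W₂. -/

import Mathlib

open MeasureTheory Module

open scoped FourierTransform RealInnerProductSpace

/-! The Fourier transform of `W` at `ξ` can be computed by first integrating along the lines
parallel to a unit vector `ω ⊥ ξ`, on which the character `x ↦ 𝐞 (-⟪x, ξ⟫)` is constant. So it
depends on `W` only through its X-ray transform in direction `ω`, and in dimension `n ≥ 2`
every `ξ` admits such an `ω`. Fourier inversion on Schwartz space concludes. -/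

variable {E F : Type*} [NormedAddCommGroup E] [InnerProductSpace ℝ E] [FiniteDimensional ℝ E]

theorem exists_norm_eq_one_inner_eq_zero (hE : 2 ≤ finrank ℝ E) (ξ : E) :
    ∃ ω : E, ‖ω‖ = 1 ∧ ⟪ω, ξ⟫ = 0 := by
  have hK : 0 < finrank ℝ (ℝ ∙ ξ)ᗮ := by
    have := (ℝ ∙ ξ).finrank_add_finrank_orthogonal
    have : finrank ℝ (ℝ ∙ ξ) ≤ 1 := (finrank_span_le_card {ξ}).trans (by simp)
    omega
  obtain ⟨⟨v, hv⟩, hv0⟩ := (finrank_pos_iff_exists_ne_zero (R := ℝ)).1 hK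
  refine ⟨‖v‖⁻¹ • v, norm_smul_inv_norm (by simpa using hv0), ?_⟩
  rw [real_inner_smul_left, Submodule.mem_orthogonal_singleton_iff_inner_left.1 hv, mul_zero]

variable [MeasurableSpace E] [BorelSpace E] [NormedAddCommGroup F]

theorem OrthonormalBasis.integral_eq_integral_integral_add_smul [NormedSpace ℝ F] {m : ℕ}
    (b : OrthonormalBasis (Fin (m + 1)) ℝ E) {g : E → F} (hg : Integrable g) :
    ∫ x, g x = ∫ y : Fin m → ℝ, ∫ t : ℝ, g ((∑ j, y j • b j.succ) + t • b 0) := by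
  let e : ℝ × (Fin m → ℝ) ≃ᵐ E :=
    ((MeasurableEquiv.piFinSuccAbove (fun _ ↦ ℝ) 0).symm.trans
      (MeasurableEquiv.toLp 2 (Fin (m + 1) → ℝ))).trans
      b.repr.symm.toHomeomorph.toMeasurableEquiv
  have he : MeasurePreserving e :=
    b.measurePreserving_repr_symm.comp
      ((EuclideanSpace.volume_preserving_symm_measurableEquiv_toLp _).symm.comp
        (volume_preserving_piFinSuccAbove (fun _ ↦ ℝ) 0).symm)
  have he_apply (t : ℝ) (y : Fin m → ℝ) : e (t, y) = (∑ j, y j • b j.succ) + t • b 0 := by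
    change b.repr.symm (WithLp.toLp 2 (Fin.insertNth 0 t y)) = _
    rw [← b.sum_repr_symm, Fin.sum_univ_succ, add_comm]
    simp
  have hge : Integrable (fun p ↦ g (e p)) (volume.prod volume) :=
    (he.integrable_comp_emb e.measurableEmbedding).2 hg
  rw [← he.integral_comp' g, Measure.volume_eq_prod, integral_prod_symm _ hge]
  simp only [he_apply]

variable [NormedSpace ℂ F]

theorem OrthonormalBasis.fourier_eq_integral_integral_add_smul {m : ℕ}
    (b : OrthonormalBasis (Fin (m + 1)) ℝ E) {f : E → F} (hf : Integrable f) {ξ : E}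
    (hξ : ⟪b 0, ξ⟫ = 0) :
    𝓕 f ξ = ∫ y : Fin m → ℝ,
      𝐞 (-⟪∑ j, y j • b j.succ, ξ⟫) • ∫ t : ℝ, f ((∑ j, y j • b j.succ) + t • b 0) := by
  rw [Real.fourier_eq, b.integral_eq_integral_integral_add_smul
    ((Real.fourierIntegral_convergent_iff ξ).2 hf)]
  congr 1 with y
  simp only [inner_add_left, real_inner_smul_left, hξ, mul_zero, add_zero, Circle.smul_def,
    integral_smul]

theorem fourier_eq_of_integral_add_smul_eq {f₁ f₂ : E → F} (hf₁ : Integrable f₁)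
    (hf₂ : Integrable f₂) {ω ξ : E} (hω : ‖ω‖ = 1) (hωξ : ⟪ω, ξ⟫ = 0)
    (h : ∀ x, ∫ t : ℝ, f₁ (x + t • ω) = ∫ t : ℝ, f₂ (x + t • ω)) :
    𝓕 f₁ ξ = 𝓕 f₂ ξ := by
  obtain ⟨m, hm⟩ : ∃ m, finrank ℝ E = m + 1 :=
    Nat.exists_eq_succ_of_ne_zero (finrank_pos_iff_exists_ne_zero.2 ⟨ω, by
      rintro rfl; simp at hω⟩).ne'
  have hω' : Orthonormal ℝ (({0} : Set (Fin (m + 1))).domRestrict fun _ ↦ ω) :=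
    ⟨fun _ ↦ hω, fun i j hij ↦ absurd (Subsingleton.elim i j) hij⟩
  obtain ⟨b, hb⟩ := hω'.exists_orthonormalBasis_extension_of_card_eq (by simpa using hm)
  have hb0 : b 0 = ω := hb 0 rfl
  rw [b.fourier_eq_integral_integral_add_smul hf₁ (hb0 ▸ hωξ),
    b.fourier_eq_integral_integral_add_smul hf₂ (hb0 ▸ hωξ)]
  simp only [hb0, h]

theorem SchwartzMap.eq_of_integral_add_smul_eq [CompleteSpace F] (hE : 2 ≤ finrank ℝ E)
    {W₁ W₂ : SchwartzMap E F}
    (h : ∀ ω : E, ‖ω‖ = 1 → ∀ x, ∫ t : ℝ, W₁ (x + t • ω) = ∫ t : ℝ, W₂ (x + t • ω)) :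
    W₁ = W₂ := by
  suffices 𝓕 W₁ = 𝓕 W₂ by simpa only [FourierPair.fourierInv_fourier_eq] using congr(𝓕⁻ $this)
  ext ξ
  obtain ⟨ω, hω, hωξ⟩ := exists_norm_eq_one_inner_eq_zero hE ξ
  exact fourier_eq_of_integral_add_smul_eq W₁.integrable W₂.integrable hω hωξ (h ω hω)

/-- Two Schwartz functions on `ℝⁿ`, `n ≥ 2`, with equal X-ray transforms
coincide. -/
theorem xray_determines_schwartz (n : ℕ) (hn : 2 ≤ n)
    (W₁ W₂ : SchwartzMap (EuclideanSpace ℝ (Fin n)) ℝ)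
    (h : ∀ ω : EuclideanSpace ℝ (Fin n), ‖ω‖ = 1 →
      ∀ x : EuclideanSpace ℝ (Fin n),
        (∫ t : ℝ, W₁ (x + t • ω)) = ∫ t : ℝ, W₂ (x + t • ω)) :
    W₁ = W₂ := by
  let toComplex := SchwartzMap.postcompCLM (E := EuclideanSpace ℝ (Fin n)) Complex.ofRealCLM
  have hc : toComplex W₁ = toComplex W₂ := by
    refine SchwartzMap.eq_of_integral_add_smul_eq (E := EuclideanSpace ℝ (Fin n))
      (by simpa using hn) fun ω hω x ↦ ?_
    simp only [toComplex, SchwartzMap.postcompCLM_apply, Complex.ofRealCLM_apply,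
      integral_complex_ofReal, h ω hω x]
  ext x
  simpa [toComplex] using congr($hc x)
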